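/- arXiv:1909.13050 — 4 statements merged into one kernel-verified Lean document; each statement's English description precedes it below -/
import Mathlib

section
/- Let a>0 and let γ:[−a,∞)→ℝ be continuous, and define Φ(x)=exp(−2∫₀ˣ γ(u)du) for x≥−a. Suppose that for every δ∈(0,a] there exists a constant Λ(δ)>0 such that ∫₀^ξ Φ(u)/(∫_{u−δ}^{u} Φ(s)ds) du = Λ(δ)·ξ for all ξ≥0. Then γ is constant on [−a,∞). -/
/-!
On each window width `δ < a`, differentiating the hypothesis in `ξ` gives `Φ u = Λ(δ) ∫_{u-δ}^u Φ`
for `u > 0`. Dividing two instances of this removes the unknown `Λ(δ)`, and differentiating the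
resulting identity in `δ` gives `Φ u Φ(v - δ) = Φ v Φ(u - δ)`. Taking logarithms, the increment
`∫_{u-δ}^u γ` does not depend on `u`, so differentiating in `u` shows `γ (u - δ) = γ u`.
Shifts by all `δ ∈ (0, a)` make `γ` constant on `(-a, ∞)`, and continuity extends this to `-a`.
-/

open MeasureTheory Set Filter Topology intervalIntegral

section Primitive

variable {f : ℝ → ℝ} {c : ℝ}

theorem ContinuousOn.intervalIntegrable_of_Ioi (hf : ContinuousOn f (Ioi c)) {p q : ℝ}
    (hp : c < p) (hq : c < q) : IntervalIntegrable f volume p q :=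
  (hf.mono fun _ hx => lt_of_lt_of_le (lt_min hp hq) hx.1).intervalIntegrable

theorem hasDerivAt_integral_of_continuousOn_Ioi (hf : ContinuousOn f (Ioi c)) {b x : ℝ}
    (hb : c < b) (hx : c < x) : HasDerivAt (fun y => ∫ t in b..y, f t) (f x) x :=
  integral_hasDerivAt_right (hf.intervalIntegrable_of_Ioi hb hx)
    (hf.stronglyMeasurableAtFilter isOpen_Ioi x hx) (hf.continuousAt (Ioi_mem_nhds hx))

theorem hasDerivAt_integral_width (hf : ContinuousOn f (Ioi c)) {x δ : ℝ}
    (hx : c < x - δ) (hδ : 0 ≤ δ) :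
    HasDerivAt (fun d => ∫ t in (x - d)..x, f t) (f (x - δ)) δ := by
  have h := (integral_hasDerivAt_left (hf.intervalIntegrable_of_Ioi hx (show c < x by linarith))
    (hf.stronglyMeasurableAtFilter isOpen_Ioi _ hx) (hf.continuousAt (Ioi_mem_nhds hx))).comp δ
    ((hasDerivAt_id δ).const_sub x)
  simpa [Function.comp_def] using h

theorem hasDerivAt_integral_sliding (hf : ContinuousOn f (Ioi c)) {x δ : ℝ}
    (hx : c < x - δ) (hδ : 0 ≤ δ) :
    HasDerivAt (fun y => ∫ t in (y - δ)..y, f t) (f x - f (x - δ)) x := by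
  have hxc : c < x := by linarith
  have hF : ∀ y, c < y → HasDerivAt (fun y => ∫ t in x..y, f t) (f y) y := fun _ =>
    hasDerivAt_integral_of_continuousOn_Ioi hf hxc
  refine ((hF x hxc).sub ((hF _ hx).comp_sub_const x δ)).congr_of_eventuallyEq ?_
  filter_upwards [Ioi_mem_nhds (show c + δ < x by linarith)] with y hy
  exact (integral_interval_sub_left (hf.intervalIntegrable_of_Ioi hxc (by linarith [mem_Ioi.1 hy]))
    (hf.intervalIntegrable_of_Ioi hxc (by linarith [mem_Ioi.1 hy]))).symm

theorem eq_of_integral_eq_mul (hc : c < 0) (hf : ContinuousOn f (Ioi c)) {Λ : ℝ}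
    (h : ∀ ξ ≥ 0, ∫ u in (0 : ℝ)..ξ, f u = Λ * ξ) {u : ℝ} (hu : 0 < u) : f u = Λ := by
  refine (hasDerivAt_integral_of_continuousOn_Ioi hf hc (hc.trans hu)).unique ?_
  refine (by simpa using (hasDerivAt_id u).const_mul Λ : HasDerivAt (fun ξ => Λ * ξ) Λ u)
    |>.congr_of_eventuallyEq ?_
  filter_upwards [Ioi_mem_nhds hu] with ξ hξ
  exact h ξ (le_of_lt hξ)

end Primitive

section Window

variable {Φ : ℝ → ℝ}

theorem eq_mul_integral_of_integral_div_eq_mul {c δ Λ : ℝ} (hΦ : ContinuousOn Φ (Ioi c))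
    (hpos : ∀ x > c, 0 < Φ x) (hδ : 0 < δ) (hcδ : c + δ < 0)
    (h : ∀ ξ ≥ 0, ∫ u in (0 : ℝ)..ξ, Φ u / ∫ s in (u - δ)..u, Φ s = Λ * ξ) {u : ℝ} (hu : 0 < u) :
    Φ u = Λ * ∫ s in (u - δ)..u, Φ s := by
  have hW : ∀ x > c + δ, 0 < ∫ s in (x - δ)..x, Φ s := fun x hx =>
    intervalIntegral_pos_of_pos_on (hΦ.intervalIntegrable_of_Ioi (by linarith) (by linarith))
      (fun y hy => hpos y (by linarith [hy.1])) (by linarith)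
  have hWc : ContinuousOn (fun x => ∫ s in (x - δ)..x, Φ s) (Ioi (c + δ)) := fun x hx =>
    (hasDerivAt_integral_sliding hΦ (by linarith [mem_Ioi.1 hx]) hδ.le)
      |>.continuousAt.continuousWithinAt
  have hratio := eq_of_integral_eq_mul hcδ
    ((hΦ.mono (Ioi_subset_Ioi (by linarith))).div hWc fun x hx => (hW x hx).ne') h hu
  rwa [Pi.div_apply, div_eq_iff (hW u (by linarith)).ne'] at hratio

theorem mul_apply_sub_eq_mul_apply_sub {a δ u v : ℝ} (hΦ : ContinuousOn Φ (Ioi (-a)))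
    (hpos : ∀ x > -a, 0 < Φ x)
    (h : ∀ d ∈ Ioo 0 a, ∃ Λ : ℝ, ∀ ξ ≥ 0,
      ∫ u in (0 : ℝ)..ξ, Φ u / ∫ s in (u - d)..u, Φ s = Λ * ξ)
    (hδ : δ ∈ Ioo 0 a) (hu : 0 < u) (hv : 0 < v) : Φ u * Φ (v - δ) = Φ v * Φ (u - δ) := by
  have hratio : ∀ d ∈ Ioo 0 a,
      Φ u * ∫ s in (v - d)..v, Φ s = Φ v * ∫ s in (u - d)..u, Φ s := by
    rintro d ⟨hd, hda⟩
    obtain ⟨Λ, hΛ⟩ := h d ⟨hd, hda⟩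
    rw [eq_mul_integral_of_integral_div_eq_mul hΦ hpos hd (by linarith) hΛ hu,
      eq_mul_integral_of_integral_div_eq_mul hΦ hpos hd (by linarith) hΛ hv]
    ring
  have hder : ∀ x > 0, HasDerivAt (fun d => ∫ s in (x - d)..x, Φ s) (Φ (x - δ)) δ := fun x hx =>
    hasDerivAt_integral_width hΦ (by linarith [hδ.2]) hδ.1.le
  exact ((hder v hv).const_mul (Φ u)).unique (((hder u hu).const_mul (Φ v)).congr_of_eventuallyEq
    (eventually_of_mem (Ioo_mem_nhds hδ.1 hδ.2) hratio))

end Window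

theorem apply_sub_eq_of_sub_apply_sub_eq {G g : ℝ → ℝ} {c δ : ℝ}
    (hG : ∀ x > c, HasDerivAt G (g x) x) (hc : c < 0) (hcδ : c + δ ≤ 0)
    (h : ∀ u > 0, ∀ v > 0, G u - G (u - δ) = G v - G (v - δ)) {u : ℝ} (hu : 0 < u) :
    g (u - δ) = g u := by
  have hder := (hG u (by linarith)).sub ((hG (u - δ) (by linarith)).comp_sub_const u δ)
  have hconst : HasDerivAt (fun v => G v - G (v - δ)) 0 u :=
    (hasDerivAt_const u (G u - G (u - δ))).congr_of_eventuallyEq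
      (eventually_of_mem (Ioi_mem_nhds hu) fun v hv => h v hv u hu)
  linarith [hder.unique hconst]

theorem eq_of_forall_apply_sub_eq {f : ℝ → ℝ} {a : ℝ} (ha : 0 < a)
    (h : ∀ δ ∈ Ioo 0 a, ∀ u > 0, f (u - δ) = f u) {x : ℝ} (hx : -a < x) : f x = f 0 := by
  have hneg : ∀ x, -a < x → x ≤ 0 → f x = f 0 := fun x hx hx0 => by
    -- both `x` and `0` are reached from `(a + x) / 2` by a shift in `(0, a)`
    have h1 := h ((a - x) / 2) ⟨by linarith, by linarith⟩ ((a + x) / 2) (by linarith)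
    have h2 := h ((a + x) / 2) ⟨by linarith, by linarith⟩ ((a + x) / 2) (by linarith)
    rw [show (a + x) / 2 - (a - x) / 2 = x by ring] at h1
    rw [sub_self] at h2
    rw [h1, h2]
  have hstep : ∀ n : ℕ, ∀ x, -a < x → x ≤ n * (a / 2) → f x = f 0 := by
    intro n
    induction n with
    | zero => exact fun x hx hx0 => hneg x hx (by simpa using hx0)
    | succ n ih =>
      intro x hx hxn
      by_cases hle : x ≤ n * (a / 2)
      · exact ih x hx hle
      · have hx0 : 0 < x := lt_of_le_of_lt (by positivity) (not_le.1 hle)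
        rw [← h (a / 2) ⟨by linarith, by linarith⟩ x hx0]
        exact ih _ (by linarith) (by push_cast at hxn; linarith)
  obtain ⟨n, hn⟩ := exists_nat_ge (x / (a / 2))
  exact hstep n x hx ((div_le_iff₀ (by linarith)).1 hn)

theorem stmt_0 (a : ℝ) (ha : 0 < a) (γ : ℝ → ℝ)
    (hγ : ContinuousOn γ (Set.Ici (-a)))
    (Φ : ℝ → ℝ)
    (hΦ : ∀ x, Φ x = Real.exp (-2 * ∫ u in (0:ℝ)..x, γ u))
    (hexp : ∀ δ ∈ Set.Ioc (0:ℝ) a, ∃ Λ > (0:ℝ), ∀ ξ ≥ (0:ℝ),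
      (∫ u in (0:ℝ)..ξ, Φ u / (∫ s in (u - δ)..u, Φ s)) = Λ * ξ) :
    ∀ x ∈ Set.Ici (-a), ∀ y ∈ Set.Ici (-a), γ x = γ y := by
  have hG : ∀ x > -a, HasDerivAt (fun x => ∫ u in (0:ℝ)..x, γ u) (γ x) x := fun x hx =>
    hasDerivAt_integral_of_continuousOn_Ioi (hγ.mono Ioi_subset_Ici_self) (by linarith) hx
  have hΦc : ContinuousOn Φ (Ioi (-a)) := by
    rw [funext hΦ]
    exact fun x hx => ((hG x hx).const_mul (-2)).exp.continuousAt.continuousWithinAt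
  have hshift : ∀ δ ∈ Ioo 0 a, ∀ u > 0, γ (u - δ) = γ u := fun δ hδ u hu => by
    refine apply_sub_eq_of_sub_apply_sub_eq hG (by linarith) (by linarith [hδ.2])
      (fun u hu v hv => ?_) hu
    have hmul := mul_apply_sub_eq_mul_apply_sub hΦc (fun x _ => hΦ x ▸ Real.exp_pos _)
      (fun d hd => (hexp d (Ioo_subset_Ioc_self hd)).imp fun _ => And.right) hδ hu hv
    simp only [hΦ, ← Real.exp_add] at hmul
    linarith [Real.exp_injective hmul]
  have hconst : EqOn γ (fun _ => γ 0) (Ici (-a)) :=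
    EqOn.of_subset_closure (fun x hx => eq_of_forall_apply_sub_eq ha hshift hx) hγ
      continuousOn_const Ioi_subset_Ici_self (closure_Ioi (-a)).ge
  intro x hx y hy
  rw [hconst hx, hconst hy]
end

section
/- Let a>0, let Φ:[−a,∞)→ℝ be continuous and strictly positive, and let Λ:(0,a]→(0,∞) be differentiable on (0,a) with Φ(ξ) = Λ(δ)·∫_{ξ−δ}^{ξ} Φ(u)du for all ξ≥0 and δ∈(0,a]. Then Φ(ξ−δ)/Φ(ξ) = −Λ'(δ)/Λ(δ)² for all ξ≥0 and δ∈(0,a). -/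
theorem stmt_4 (a : ℝ) (ha : 0 < a) (Φ : ℝ → ℝ)
    (hΦc : ContinuousOn Φ (Set.Ici (-a)))
    (hΦpos : ∀ x ∈ Set.Ici (-a), 0 < Φ x)
    (Λ Λ' : ℝ → ℝ) (hΛpos : ∀ δ ∈ Set.Ioc (0:ℝ) a, 0 < Λ δ)
    (hΛ' : ∀ δ ∈ Set.Ioo (0:ℝ) a, HasDerivAt Λ (Λ' δ) δ)
    (h : ∀ ξ ≥ (0:ℝ), ∀ δ ∈ Set.Ioc (0:ℝ) a,
      Φ ξ = Λ δ * ∫ u in (ξ - δ)..ξ, Φ u) :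
    ∀ ξ ≥ (0:ℝ), ∀ δ ∈ Set.Ioo (0:ℝ) a,
      Φ (ξ - δ) / Φ ξ = -Λ' δ / (Λ δ) ^ 2 := by
  intro ξ hξ δ hδ
  obtain ⟨hδ0, hδa⟩ := hδ
  have hΛδ : 0 < Λ δ := hΛpos δ ⟨hδ0, hδa.le⟩
  have hΦξ : 0 < Φ ξ := hΦpos ξ (by simp [Set.mem_Ici]; linarith)
  have hsub : Set.uIcc (ξ - δ) ξ ⊆ Set.Ici (-a) := by
    rw [Set.uIcc_of_le (by linarith)]
    intro x hx
    rcases hx with ⟨h1, h2⟩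
    simp only [Set.mem_Ici]
    linarith
  have hInt : IntervalIntegrable Φ MeasureTheory.volume (ξ - δ) ξ :=
    (hΦc.mono hsub).intervalIntegrable
  have hlt : -a < ξ - δ := by linarith
  have hcontAt : ContinuousAt Φ (ξ - δ) :=
    hΦc.continuousAt (Ici_mem_nhds hlt)
  have hmeas : StronglyMeasurableAtFilter Φ (nhds (ξ - δ)) :=
    ⟨Set.Ioi (-a), Ioi_mem_nhds hlt,
      (hΦc.mono Set.Ioi_subset_Ici_self).aestronglyMeasurable measurableSet_Ioi⟩
  have hG : HasDerivAt (fun t => ∫ u in t..ξ, Φ u) (-Φ (ξ - δ)) (ξ - δ) :=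
    intervalIntegral.integral_hasDerivAt_left hInt hmeas hcontAt
  have hF : HasDerivAt (fun d => ∫ u in (ξ - d)..ξ, Φ u) (Φ (ξ - δ)) δ := by
    have hid : HasDerivAt (fun d : ℝ => ξ - d) (-1) δ := by
      simpa using (hasDerivAt_id δ).const_sub ξ
    have := hG.comp δ hid
    simp only [mul_neg, mul_one, neg_neg] at this
    exact this
  -- the other expression for the integral
  have hF2 : HasDerivAt (fun d => Φ ξ * (Λ d)⁻¹)
      (Φ ξ * (-Λ' δ / (Λ δ) ^ 2)) δ := by
    have hinv : HasDerivAt (fun d => (Λ d)⁻¹) (-Λ' δ / (Λ δ) ^ 2) δ :=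
      (hΛ' δ ⟨hδ0, hδa⟩).inv hΛδ.ne'
    exact hinv.const_mul (Φ ξ)
  have heq : (fun d => ∫ u in (ξ - d)..ξ, Φ u) =ᶠ[nhds δ]
      (fun d => Φ ξ * (Λ d)⁻¹) := by
    filter_upwards [Ioo_mem_nhds hδ0 hδa] with d hd
    have hΛd : 0 < Λ d := hΛpos d ⟨hd.1, hd.2.le⟩
    have := h ξ hξ d ⟨hd.1, hd.2.le⟩
    field_simp at this ⊢
    linarith [this]
  have hF' : HasDerivAt (fun d => ∫ u in (ξ - d)..ξ, Φ u)
      (Φ ξ * (-Λ' δ / (Λ δ) ^ 2)) δ := hF2.congr_of_eventuallyEq heq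
  have hkey : Φ (ξ - δ) = Φ ξ * (-Λ' δ / (Λ δ) ^ 2) := hF.unique hF'
  rw [hkey]
  field_simp
end

section
/- Let a>0 and let Φ:[−a,∞)→ℝ be continuously differentiable and strictly positive with Φ(0)=1, satisfying Lobacevsky's functional equation Φ(ξ−δ)·Φ(ξ+δ) = Φ(ξ)² for all ξ≥0 and all δ∈(0,a]. Then there exists β∈ℝ such that Φ(ξ)=e^{βξ} for all ξ∈[−a,∞). -/
theorem stmt_8 (a : ℝ) (ha : 0 < a) (Φ Φ' : ℝ → ℝ)
    (hΦpos : ∀ x ∈ Set.Ici (-a), 0 < Φ x)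
    (hΦ0 : Φ 0 = 1)
    (hΦ' : ∀ x ∈ Set.Ici (-a), HasDerivWithinAt Φ (Φ' x) (Set.Ici (-a)) x)
    (hΦ'c : ContinuousOn Φ' (Set.Ici (-a)))
    (h : ∀ ξ ≥ (0:ℝ), ∀ δ ∈ Set.Ioc (0:ℝ) a,
      Φ (ξ - δ) * Φ (ξ + δ) = Φ ξ ^ 2) :
    ∃ β : ℝ, ∀ ξ ∈ Set.Ici (-a), Φ ξ = Real.exp (β * ξ) := by
  -- derivative at interior points
  have hΦd : ∀ x, -a < x → HasDerivAt Φ (Φ' x) x := by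
    intro x hx
    exact (hΦ' x (le_of_lt hx)).hasDerivAt (Ici_mem_nhds hx)
  have hΦc : ContinuousOn Φ (Set.Ici (-a)) := fun x hx =>
    (hΦ' x hx).continuousWithinAt
  -- the δ-derivative relation
  have hδrel : ∀ ξ ≥ (0:ℝ), ∀ δ ∈ Set.Ioo (0:ℝ) a,
      Φ' (ξ - δ) * Φ (ξ + δ) = Φ (ξ - δ) * Φ' (ξ + δ) := by
    intro ξ hξ δ hδ
    have h1 : -a < ξ - δ := by linarith [hδ.2]
    have h2 : -a < ξ + δ := by linarith [hδ.1]
    have hd1 : HasDerivAt (fun d : ℝ => Φ (ξ - d)) (-Φ' (ξ - δ)) δ := by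
      have := (hΦd _ h1).comp δ ((hasDerivAt_const δ ξ).sub (hasDerivAt_id δ))
      simpa [Function.comp_def] using this
    have hd2 : HasDerivAt (fun d : ℝ => Φ (ξ + d)) (Φ' (ξ + δ)) δ := by
      have := (hΦd _ h2).comp δ ((hasDerivAt_const δ ξ).add (hasDerivAt_id δ))
      simpa [Function.comp_def] using this
    have hF : HasDerivAt (fun d : ℝ => Φ (ξ - d) * Φ (ξ + d))
        (-Φ' (ξ - δ) * Φ (ξ + δ) + Φ (ξ - δ) * Φ' (ξ + δ)) δ := hd1.mul hd2
    have hev : (fun d : ℝ => Φ (ξ - d) * Φ (ξ + d)) =ᶠ[nhds δ]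
        (fun _ : ℝ => Φ ξ ^ 2) := by
      filter_upwards [isOpen_Ioo.mem_nhds hδ] with d hd
      exact h ξ hξ d ⟨hd.1, le_of_lt hd.2⟩
    have hzero : HasDerivAt (fun d : ℝ => Φ (ξ - d) * Φ (ξ + d)) 0 δ :=
      (hasDerivAt_const δ (Φ ξ ^ 2)).congr_of_eventuallyEq hev
    have := hF.unique hzero
    linarith
  -- the ξ-derivative relation
  have hξrel : ∀ ξ : ℝ, 0 < ξ → ∀ δ ∈ Set.Ioo (0:ℝ) a,
      Φ' (ξ - δ) * Φ (ξ + δ) + Φ (ξ - δ) * Φ' (ξ + δ) = 2 * Φ ξ * Φ' ξ := by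
    intro ξ hξ δ hδ
    have h1 : -a < ξ - δ := by linarith [hδ.2]
    have h2 : -a < ξ + δ := by linarith [hδ.1]
    have h3 : -a < ξ := by linarith
    have hd1 : HasDerivAt (fun x : ℝ => Φ (x - δ)) (Φ' (ξ - δ)) ξ := by
      have := (hΦd _ h1).comp ξ ((hasDerivAt_id ξ).sub_const δ)
      simpa [Function.comp_def] using this
    have hd2 : HasDerivAt (fun x : ℝ => Φ (x + δ)) (Φ' (ξ + δ)) ξ := by
      have := (hΦd _ h2).comp ξ ((hasDerivAt_id ξ).add_const δ)
      simpa [Function.comp_def] using this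
    have hG : HasDerivAt (fun x : ℝ => Φ (x - δ) * Φ (x + δ))
        (Φ' (ξ - δ) * Φ (ξ + δ) + Φ (ξ - δ) * Φ' (ξ + δ)) ξ := hd1.mul hd2
    have hR : HasDerivAt (fun x : ℝ => Φ x ^ 2) (2 * Φ ξ * Φ' ξ) ξ := by
      have : HasDerivAt (fun x : ℝ => Φ x ^ 2) (((2:ℕ):ℝ) * Φ ξ ^ (2 - 1) * Φ' ξ) ξ :=
        (hΦd ξ h3).fun_pow 2
      convert this using 1
      ring
    have hev : (fun x : ℝ => Φ (x - δ) * Φ (x + δ)) =ᶠ[nhds ξ]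
        (fun x : ℝ => Φ x ^ 2) := by
      filter_upwards [isOpen_Ioi.mem_nhds hξ] with x hx
      exact h x (le_of_lt hx) δ ⟨hδ.1, le_of_lt hδ.2⟩
    exact hG.unique (hR.congr_of_eventuallyEq hev)
  set f : ℝ → ℝ := fun x => Φ' x / Φ x with hf
  -- the step relation for f on the positive axis
  have fstep : ∀ ξ : ℝ, 0 < ξ → ∀ δ ∈ Set.Ioo (0:ℝ) a, f (ξ + δ) = f ξ := by
    intro ξ hξ δ hδ
    have h1 : -a ≤ ξ - δ := by linarith [hδ.2]
    have h2 : -a ≤ ξ + δ := by linarith [hδ.1]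
    have h3 : -a ≤ ξ := by linarith
    have e1 := hδrel ξ (le_of_lt hξ) δ hδ
    have e2 := hξrel ξ hξ δ hδ
    have e3 := h ξ (le_of_lt hξ) δ ⟨hδ.1, le_of_lt hδ.2⟩
    have p1 := hΦpos _ h1
    have p2 := hΦpos _ h2
    have p3 := hΦpos _ h3
    -- 2 Φ(ξ-δ) Φ'(ξ+δ) = 2 Φ ξ Φ' ξ
    have e4 : Φ (ξ - δ) * Φ' (ξ + δ) = Φ ξ * Φ' ξ := by linarith
    -- multiply by Φ(ξ+δ) and use e3
    have e5 : Φ ξ ^ 2 * Φ' (ξ + δ) = Φ ξ * Φ' ξ * Φ (ξ + δ) := by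
      calc Φ ξ ^ 2 * Φ' (ξ + δ) = Φ (ξ - δ) * Φ (ξ + δ) * Φ' (ξ + δ) := by rw [e3]
        _ = (Φ (ξ - δ) * Φ' (ξ + δ)) * Φ (ξ + δ) := by ring
        _ = Φ ξ * Φ' ξ * Φ (ξ + δ) := by rw [e4]
    have e6 : Φ ξ * Φ' (ξ + δ) = Φ' ξ * Φ (ξ + δ) := by
      have hne : Φ ξ ≠ 0 := ne_of_gt p3
      field_simp at e5 ⊢
      nlinarith [e5]
    simp only [hf]
    field_simp
    linarith [e6]
  -- chaining: f is constant on (0, ∞)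
  have chain : ∀ n : ℕ, ∀ x : ℝ, 0 < x → ∀ y, x ≤ y → y ≤ x + n * (a / 2) →
      f y = f x := by
    intro n
    induction n with
    | zero =>
      intro x hx y hxy hyx
      have : y = x := le_antisymm (by simpa using hyx) hxy
      rw [this]
    | succ n ih =>
      intro x hx y hxy hyx
      by_cases hc : y ≤ x + a / 2
      · rcases eq_or_lt_of_le hxy with rfl | hlt
        · rfl
        · have : f (x + (y - x)) = f x :=
            fstep x hx (y - x) ⟨by linarith, by linarith⟩
          simpa using this
      · push_neg at hc
        have hxa : (0:ℝ) < x + a / 2 := by linarith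
        have h1 : f y = f (x + a / 2) := by
          apply ih (x + a / 2) hxa y (le_of_lt hc)
          push_cast [Nat.cast_succ] at hyx ⊢
          linarith
        have h2 : f (x + a / 2) = f x :=
          fstep x hx (a / 2) ⟨by linarith, by linarith⟩
        rw [h1, h2]
  have hposconst : ∀ x : ℝ, 0 < x → ∀ y, x ≤ y → f y = f x := by
    intro x hx y hxy
    obtain ⟨n, hn⟩ := exists_nat_ge ((y - x) / (a / 2))
    apply chain n x hx y hxy
    have h2 : (0:ℝ) < a / 2 := by linarith
    rw [div_le_iff₀ h2] at hn
    linarith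
  set β : ℝ := f (a / 2) with hβdef
  have ha2 : (0:ℝ) < a / 2 := by linarith
  have hfpos : ∀ x : ℝ, 0 < x → f x = β := by
    intro x hx
    by_cases hc : x ≤ a / 2
    · exact (hposconst x hx (a / 2) hc).symm
    · push_neg at hc
      exact hposconst (a / 2) ha2 x (le_of_lt hc)
  -- negative side via ξ = 0
  have hfneg : ∀ δ ∈ Set.Ioo (0:ℝ) a, f (-δ) = β := by
    intro δ hδ
    have e1 := hδrel 0 le_rfl δ hδ
    simp only [zero_sub, zero_add] at e1
    have p1 : 0 < Φ (-δ) := hΦpos _ (by simp only [Set.mem_Ici]; linarith [hδ.2])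
    have p2 : 0 < Φ δ := hΦpos _ (by simp only [Set.mem_Ici]; linarith [hδ.1])
    have : f (-δ) = f δ := by
      simp only [hf]
      field_simp
      linarith [e1]
    rw [this, hfpos δ hδ.1]
  have hfcont : ContinuousOn f (Set.Ici (-a)) :=
    hΦ'c.div hΦc fun x hx => ne_of_gt (hΦpos x hx)
  have h0mem : (0:ℝ) ∈ Set.Ici (-a) := by simp only [Set.mem_Ici]; linarith
  -- f 0 = β by continuity
  have hf0 : f 0 = β := by
    have hsub : Set.Ioi (0:ℝ) ⊆ Set.Ici (-a) := fun x hx => by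
      simp only [Set.mem_Ici]; linarith [Set.mem_Ioi.1 hx]
    have ht : Filter.Tendsto f (nhdsWithin 0 (Set.Ioi 0)) (nhds (f 0)) :=
      (hfcont 0 h0mem).mono hsub
    have ht2 : Filter.Tendsto f (nhdsWithin 0 (Set.Ioi 0)) (nhds β) := by
      apply Filter.Tendsto.congr' _ tendsto_const_nhds
      filter_upwards [self_mem_nhdsWithin] with x hx
      exact (hfpos x (Set.mem_Ioi.1 hx)).symm
    exact tendsto_nhds_unique ht ht2
  have hIoi : ∀ x : ℝ, -a < x → f x = β := by
    intro x hx
    rcases lt_trichotomy x 0 with hneg | rfl | hpos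
    · have : f (-(-x)) = β := hfneg (-x) ⟨by linarith, by linarith⟩
      simpa using this
    · exact hf0
    · exact hfpos x hpos
  have hfa : f (-a) = β := by
    have hsub : Set.Ioi (-a) ⊆ Set.Ici (-a) := Set.Ioi_subset_Ici_self
    have ht : Filter.Tendsto f (nhdsWithin (-a) (Set.Ioi (-a))) (nhds (f (-a))) :=
      (hfcont (-a) Set.self_mem_Ici).mono hsub
    have ht2 : Filter.Tendsto f (nhdsWithin (-a) (Set.Ioi (-a))) (nhds β) := by
      apply Filter.Tendsto.congr' _ tendsto_const_nhds
      filter_upwards [self_mem_nhdsWithin] with x hx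
      exact (hIoi x (Set.mem_Ioi.1 hx)).symm
    exact tendsto_nhds_unique ht ht2
  have hβ : ∀ x ∈ Set.Ici (-a), Φ' x = β * Φ x := by
    intro x hx
    have hfx : f x = β := by
      rcases eq_or_lt_of_le (Set.mem_Ici.1 hx) with heq | hlt
      · rw [← heq]; exact hfa
      · exact hIoi x hlt
    have hne : Φ x ≠ 0 := ne_of_gt (hΦpos x hx)
    simp only [hf] at hfx
    field_simp at hfx
    linarith [hfx]
  -- the auxiliary function Φ x * exp (-β x) is constant
  refine ⟨β, fun ξ hξ => ?_⟩
  set E : ℝ → ℝ := fun x => Φ x * Real.exp (-β * x) with hE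
  have hEd : ∀ x ∈ Set.Ici (-a), HasDerivWithinAt E 0 (Set.Ici x) x := by
    intro x hx
    have hexp : HasDerivAt (fun y : ℝ => Real.exp (-β * y))
        (-β * Real.exp (-β * x)) x := by
      have h1 : HasDerivAt (fun y : ℝ => -β * y) (-β) x := by
        simpa using (hasDerivAt_id x).const_mul (-β)
      have := (Real.hasDerivAt_exp (-β * x)).comp x h1
      simpa [Function.comp_def, mul_comm] using this
    have hΦx : HasDerivWithinAt Φ (Φ' x) (Set.Ici x) x :=
      (hΦ' x hx).mono (Set.Ici_subset_Ici.2 (Set.mem_Ici.1 hx))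
    have hprod := hΦx.mul hexp.hasDerivWithinAt
    have : Φ' x * Real.exp (-β * x) + Φ x * (-β * Real.exp (-β * x)) = 0 := by
      rw [hβ x hx]; ring
    rw [this] at hprod
    exact hprod
  have hEc : ContinuousOn E (Set.Ici (-a)) :=
    hΦc.mul ((Real.continuous_exp.comp (continuous_const.mul continuous_id)).continuousOn)
  have key : ∀ b : ℝ, ∀ x ∈ Set.Icc (-a) b, E x = E (-a) := by
    intro b x hx
    apply constant_of_has_deriv_right_zero (hEc.mono Set.Icc_subset_Ici_self)
    · intro y hy
      exact hEd y (Set.mem_Ici.2 hy.1)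
    · exact hx
  have hIcc1 : ξ ∈ Set.Icc (-a) (max ξ 0) :=
    ⟨Set.mem_Ici.1 hξ, le_max_left ξ 0⟩
  have hIcc2 : (0:ℝ) ∈ Set.Icc (-a) (max ξ 0) :=
    ⟨by linarith, le_max_right ξ 0⟩
  have e1 : E ξ = E (-a) := key (max ξ 0) ξ hIcc1
  have e2 : E 0 = E (-a) := key (max ξ 0) 0 hIcc2
  have e3 : E 0 = 1 := by simp [hE, hΦ0]
  have e4 : E ξ = 1 := by rw [e1, ← e2, e3]
  simp only [hE] at e4
  have hexpne : Real.exp (-β * ξ) ≠ 0 := Real.exp_ne_zero _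
  have : Φ ξ = (Real.exp (-β * ξ))⁻¹ := by
    field_simp at e4 ⊢
    linarith [e4]
  rw [this, ← Real.exp_neg]
  ring_nf
end

section
/- Let θ>0, σ>0, μ∈ℝ, x≥0 and δ>0. Set r=√(μ²+2θσ²), κ₊=(μ+r)/σ² and κ₋=(μ−r)/σ². Suppose E,I∈ℝ satisfy, for both κ=κ₊ and κ=κ₋, the equation (e^{−κ(x+δ)} + κ(x+δ) + μκ/θ)·E + θκ·I = e^{−κx} + κx + μκ/θ. Then E = e^{δμ/σ²}·( r·cosh(x·r/σ²) + μ·sinh(x·r/σ²) ) / ( r·cosh((x+δ)·r/σ²) + μ·sinh((x+δ)·r/σ²) ). -/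
/-!
Multiplying the equation for `κ₊` by `κ₋`, the one for `κ₋` by `κ₊` and subtracting eliminates
`I` together with all terms linear in `κ`, leaving `f (x + δ) * E = f x` for
`f z = κ₋ e^{-κ₊ z} - κ₊ e^{-κ₋ z}`. Since `κ± = (μ ± r)/σ²`,
`f z = -(2/σ²) e^{-μz/σ²} (r cosh (zr/σ²) + μ sinh (zr/σ²))`, and the bracket is positive
because `r > |μ|`.
-/

open Real

theorem abs_lt_sqrt_sq_add (μ : ℝ) {ε : ℝ} (hε : 0 < ε) : |μ| < √(μ ^ 2 + ε) := by
  rw [Real.lt_sqrt (abs_nonneg μ), sq_abs]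
  linarith

theorem mul_cosh_add_mul_sinh_pos {r μ : ℝ} (h : |μ| < r) (t : ℝ) :
    0 < r * cosh t + μ * sinh t := by
  obtain ⟨hlt, hgt⟩ := abs_lt.mp h
  have hsplit : r * cosh t + μ * sinh t = ((r + μ) * exp t + (r - μ) * exp (-t)) / 2 := by
    rw [cosh_eq, sinh_eq]; ring
  rw [hsplit]
  have := mul_pos (sub_pos.mpr hgt) (exp_pos (-t))
  have := mul_pos (show 0 < r + μ by linarith) (exp_pos t)
  linarith

theorem sub_mul_exp_eq_of_system {a b c d x y E I : ℝ}
    (ha : (exp (-a * y) + a * y + c * a / d) * E + d * a * I = exp (-a * x) + a * x + c * a / d)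
    (hb : (exp (-b * y) + b * y + c * b / d) * E + d * b * I = exp (-b * x) + b * x + c * b / d) :
    (b * exp (-a * y) - a * exp (-b * y)) * E = b * exp (-a * x) - a * exp (-b * x) := by
  linear_combination b * ha - a * hb

theorem div_mul_exp_sub_div_mul_exp_eq (μ r s z : ℝ) :
    (μ - r) / s * exp (-((μ + r) / s) * z) - (μ + r) / s * exp (-((μ - r) / s) * z)
      = -(2 / s) * exp (-(μ * z) / s) * (r * cosh (z * r / s) + μ * sinh (z * r / s)) := by
  have hp : exp (-((μ + r) / s) * z) = exp (-(μ * z) / s) * exp (-(z * r / s)) := by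
    rw [← exp_add]; ring_nf
  have hm : exp (-((μ - r) / s) * z) = exp (-(μ * z) / s) * exp (z * r / s) := by
    rw [← exp_add]; ring_nf
  rw [hp, hm, cosh_eq, sinh_eq]
  ring

theorem stmt_10_general (θ σ μ x δ : ℝ) (hθ : 0 < θ) (hσ : 0 < σ)
    (r κp κm : ℝ)
    (hr : r = Real.sqrt (μ ^ 2 + 2 * θ * σ ^ 2))
    (hκp : κp = (μ + r) / σ ^ 2)
    (hκm : κm = (μ - r) / σ ^ 2)
    (E I : ℝ)
    (hsys : ∀ κ ∈ ({κp, κm} : Set ℝ),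
      (Real.exp (-κ * (x + δ)) + κ * (x + δ) + μ * κ / θ) * E + θ * κ * I
        = Real.exp (-κ * x) + κ * x + μ * κ / θ) :
    E = Real.exp (δ * μ / σ ^ 2) *
      (r * Real.cosh (x * r / σ ^ 2) + μ * Real.sinh (x * r / σ ^ 2)) /
      (r * Real.cosh ((x + δ) * r / σ ^ 2) + μ * Real.sinh ((x + δ) * r / σ ^ 2)) := by
  have hrμ : |μ| < r := hr ▸ abs_lt_sqrt_sq_add μ (by positivity)
  have hE := sub_mul_exp_eq_of_system (hsys κp (by simp)) (hsys κm (by simp))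
  rw [hκp, hκm, div_mul_exp_sub_div_mul_exp_eq, div_mul_exp_sub_div_mul_exp_eq] at hE
  have hshift : exp (-(μ * x) / σ ^ 2) = exp (δ * μ / σ ^ 2) * exp (-(μ * (x + δ)) / σ ^ 2) := by
    rw [← exp_add]; ring_nf
  rw [hshift] at hE
  rw [eq_div_iff (mul_cosh_add_mul_sinh_pos hrμ _).ne']
  have hc : -(2 / σ ^ 2) * exp (-(μ * (x + δ)) / σ ^ 2) ≠ 0 :=
    mul_ne_zero (neg_ne_zero.mpr (by positivity)) (exp_pos _).ne'
  exact mul_left_cancel₀ hc (by linear_combination hE)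

theorem stmt_10 (θ σ μ x δ : ℝ) (hθ : 0 < θ) (hσ : 0 < σ)
    (hx : 0 ≤ x) (hδ : 0 < δ)
    (r κp κm : ℝ)
    (hr : r = Real.sqrt (μ ^ 2 + 2 * θ * σ ^ 2))
    (hκp : κp = (μ + r) / σ ^ 2)
    (hκm : κm = (μ - r) / σ ^ 2)
    (E I : ℝ)
    (hsys : ∀ κ ∈ ({κp, κm} : Set ℝ),
      (Real.exp (-κ * (x + δ)) + κ * (x + δ) + μ * κ / θ) * E + θ * κ * I
        = Real.exp (-κ * x) + κ * x + μ * κ / θ) :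
    E = Real.exp (δ * μ / σ ^ 2) *
      (r * Real.cosh (x * r / σ ^ 2) + μ * Real.sinh (x * r / σ ^ 2)) /
      (r * Real.cosh ((x + δ) * r / σ ^ 2) + μ * Real.sinh ((x + δ) * r / σ ^ 2)) :=
  stmt_10_general θ σ μ x δ hθ hσ r κp κm hr hκp hκm E I hsys
end
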